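/- arXiv:1006.4396 — 7 statements merged into one kernel-verified Lean document; each statement's English description precedes it below -/
import Mathlib

section
/- Let π and π' be bijections from a finite set V to {1,...,|V|}, let p be a non-integer real, and define L = {u ∈ V : π(u) < p < π'(u)} and R = {u ∈ V : π'(u) < p < π(u)}. Then the Kendall-Tau distance d(π,π') (the number of unordered pairs {u,v} with (π(u) < π(v)) ≠ (π'(u) < π'(v))) satisfies d(π,π') ≥ |L|·|R|. -/
noncomputable def pos {V : Type*} [Fintype V] (π : V ≃ Fin (Fintype.card V)) (v : V) : ℝ :=
  ((π v : ℕ) : ℝ) + 1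

/-- Kendall-Tau distance: the number of unordered pairs ordered differently
(each such pair `{u,v}` is counted exactly once, as the ordered pair with
`π u < π v` and `π' v < π' u`). -/
def kendall {V : Type*} [Fintype V] (π π' : V ≃ Fin (Fintype.card V)) : ℕ :=
  (Finset.univ.filter (fun uv : V × V => π uv.1 < π uv.2 ∧ π' uv.2 < π' uv.1)).card

theorem stmt2 {V : Type*} [Fintype V]
    (π π' : V ≃ Fin (Fintype.card V)) (p : ℝ) (hp : ∀ z : ℤ, (z : ℝ) ≠ p) :
    Set.ncard {u : V | pos π u < p ∧ p < pos π' u}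
        * Set.ncard {u : V | pos π' u < p ∧ p < pos π u}
      ≤ kendall π π' := by
  classical
  set L : Finset V := Finset.univ.filter (fun u => pos π u < p ∧ p < pos π' u) with hLdef
  set R : Finset V := Finset.univ.filter (fun u => pos π' u < p ∧ p < pos π u) with hRdef
  have hL : Set.ncard {u : V | pos π u < p ∧ p < pos π' u} = L.card := by
    rw [hLdef]
    rw [← Set.ncard_coe_finset]
    congr 1
    ext u
    simp
  have hR : Set.ncard {u : V | pos π' u < p ∧ p < pos π u} = R.card := by
    rw [hRdef]
    rw [← Set.ncard_coe_finset]
    congr 1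
    ext u
    simp
  rw [hL, hR, ← Finset.card_product]
  apply Finset.card_le_card
  intro uv huv
  simp only [Finset.mem_product, hLdef, hRdef, Finset.mem_filter, Finset.mem_univ,
    true_and] at huv
  obtain ⟨⟨h1, h2⟩, h3, h4⟩ := huv
  simp only [kendall, Finset.mem_filter, Finset.mem_univ, true_and]
  constructor
  · have : pos π uv.1 < pos π uv.2 := lt_trans h1 h4
    simp only [pos] at this
    have hn : (π uv.1 : ℕ) < (π uv.2 : ℕ) := by exact_mod_cast (by linarith : ((π uv.1 : ℕ) : ℝ) < ((π uv.2 : ℕ) : ℝ))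
    exact hn
  · have : pos π' uv.2 < pos π' uv.1 := lt_trans h3 h2
    simp only [pos] at this
    have hn : (π' uv.2 : ℕ) < (π' uv.1 : ℕ) := by exact_mod_cast (by linarith : ((π' uv.2 : ℕ) : ℝ) < ((π' uv.1 : ℕ) : ℝ))
    exact hn
end

section
/- Let π and π' be bijections from a finite set V to {1,...,|V|}, let p be a non-integer real, and define L = {u ∈ V : π(u) < p < π'(u)} and R = {u ∈ V : π'(u) < p < π(u)}. Then |L| ≤ √(d(π,π')), where d is the Kendall-Tau distance. -/
theorem stmt3 {V : Type*} [Fintype V]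
    (π π' : V ≃ Fin (Fintype.card V)) (p : ℝ) (hp : ∀ z : ℤ, (z : ℝ) ≠ p) :
    (Set.ncard {u : V | pos π u < p ∧ p < pos π' u} : ℝ)
      ≤ Real.sqrt (kendall π π') := by
  classical
  set L : Finset V := Finset.univ.filter (fun u => pos π u < p ∧ p < pos π' u) with hL
  set R : Finset V := Finset.univ.filter (fun u => pos π' u < p ∧ p < pos π u) with hR
  -- p is never equal to a position
  have hne : ∀ (σ : V ≃ Fin (Fintype.card V)) (u : V), pos σ u ≠ p := by
    intro σ u h
    apply hp (((σ u : ℕ) : ℤ) + 1)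
    rw [← h]; simp [pos]
  -- number of elements with position < p is independent of the permutation
  have key : ∀ σ : V ≃ Fin (Fintype.card V),
      (Finset.univ.filter (fun u => pos σ u < p)).card
        = (Finset.univ.filter (fun i : Fin (Fintype.card V) => ((i : ℕ) : ℝ) + 1 < p)).card := by
    intro σ
    apply Finset.card_bij (fun u _ => σ u)
    · intro u hu
      simp only [Finset.mem_filter, Finset.mem_univ, true_and] at hu ⊢
      exact hu
    · intro u _ v _ h
      exact σ.injective h
    · intro i hi
      refine ⟨σ.symm i, ?_, by simp⟩
      simp only [Finset.mem_filter, Finset.mem_univ, true_and] at hi ⊢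
      simpa [pos] using hi
  -- split: card (pos σ < p) = card (pos σ < p ∧ pos τ < p) + card (pos σ < p ∧ p < pos τ)
  have split : ∀ σ τ : V ≃ Fin (Fintype.card V),
      (Finset.univ.filter (fun u => pos σ u < p)).card
        = (Finset.univ.filter (fun u => pos σ u < p ∧ pos τ u < p)).card
          + (Finset.univ.filter (fun u => pos σ u < p ∧ p < pos τ u)).card := by
    intro σ τ
    have h := Finset.card_filter_add_card_filter_not
        (s := Finset.univ.filter (fun u => pos σ u < p)) (p := fun u => pos τ u < p)
    rw [Finset.filter_filter, Finset.filter_filter] at h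
    rw [← h]
    congr 1
    congr 1
    apply Finset.filter_congr
    intro u _
    simp only [not_lt, eq_iff_iff, and_congr_right_iff]
    intro _
    constructor
    · intro h'; exact lt_of_le_of_ne h' (fun he => hne τ u he.symm)
    · exact le_of_lt
  have hLR : L.card = R.card := by
    have h1 := split π π'
    have h2 := split π' π
    have h3 : (Finset.univ.filter (fun u => pos π u < p ∧ pos π' u < p)).card
        = (Finset.univ.filter (fun u => pos π' u < p ∧ pos π u < p)).card := by
      congr 1; apply Finset.filter_congr; intro u _; simp [and_comm]
    have h4 := key π
    have h5 := key π'
    rw [hL, hR]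
    omega
  -- L × R injects into inversions
  have hsub : L ×ˢ R ⊆ Finset.univ.filter
      (fun uv : V × V => π uv.1 < π uv.2 ∧ π' uv.2 < π' uv.1) := by
    intro uv huv
    rw [Finset.mem_product] at huv
    obtain ⟨hu, hv⟩ := huv
    simp only [hL, hR, Finset.mem_filter, Finset.mem_univ, true_and] at hu hv
    simp only [Finset.mem_filter, Finset.mem_univ, true_and]
    have h1 : pos π uv.1 < pos π uv.2 := lt_trans hu.1 hv.2
    have h2 : pos π' uv.2 < pos π' uv.1 := lt_trans hv.1 hu.2
    unfold pos at h1 h2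
    constructor
    · rw [Fin.lt_def]
      have : ((π uv.1 : ℕ) : ℝ) < ((π uv.2 : ℕ) : ℝ) := by linarith
      exact_mod_cast this
    · rw [Fin.lt_def]
      have : ((π' uv.2 : ℕ) : ℝ) < ((π' uv.1 : ℕ) : ℝ) := by linarith
      exact_mod_cast this
  have hcard : L.card * R.card ≤ kendall π π' := by
    rw [← Finset.card_product]
    exact Finset.card_le_card hsub
  have hset : {u : V | pos π u < p ∧ p < pos π' u} = ↑L := by
    ext u; simp [hL]
  rw [hset, Set.ncard_coe_finset]
  have hsq : (L.card : ℝ) ^ 2 ≤ (kendall π π' : ℝ) := by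
    have h : (L.card : ℝ) ^ 2 = (L.card : ℝ) * (R.card : ℝ) := by rw [← hLR]; ring
    rw [h]; exact_mod_cast hcard
  calc (L.card : ℝ) = Real.sqrt ((L.card : ℝ) ^ 2) := by
        rw [Real.sqrt_sq (by positivity)]
    _ ≤ Real.sqrt (kendall π π') := Real.sqrt_le_sqrt hsq
end

section
/- Let V be a finite set with weights w : V × V → [0,1] satisfying w(u,v) + w(v,u) = 1 for all distinct u,v. For a ranking π of V, vertex v, and non-integer real p, define b(π,v,p) = Σ_{u ≠ v} (w(v,u) if p > π(u), w(u,v) if p < π(u)). Then for any two rankings π, π' of V, any v, and any non-integer p: |b(π,v,p) − b(π',v,p)| ≤ 2√(d(π,π')), where d is the Kendall-Tau distance. -/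
/-- Weight of arcs incident to `v` that become backwards when `v` is placed at
position `p` in ranking `π`. -/
noncomputable def bwt {V : Type*} [Fintype V] [DecidableEq V] (w : V → V → ℝ)
    (π : V ≃ Fin (Fintype.card V)) (v : V) (p : ℝ) : ℝ :=
  ∑ u ∈ Finset.univ.erase v, if pos π u < p then w v u else w u v

/-!
Passing from `π` to `π'` changes the summand of `bwt` only for the vertices that cross `p`, and each
by at most `1`. Both rankings put the same number of vertices before `p`, so as many vertices cross
upwards as downwards, say `k` each; every upward crosser forms a discordant pair with every downward
crosser, whence `k² ≤ d(π, π')`.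
-/

open Finset

section

variable {V : Type*} [Fintype V]

noncomputable def rankBelow (σ : V ≃ Fin (Fintype.card V)) (p : ℝ) : Finset V :=
  univ.filter fun u => pos σ u < p

@[simp]
lemma mem_rankBelow {σ : V ≃ Fin (Fintype.card V)} {p : ℝ} {u : V} :
    u ∈ rankBelow σ p ↔ pos σ u < p := by
  simp [rankBelow]

lemma card_rankBelow_eq (σ σ' : V ≃ Fin (Fintype.card V)) (p : ℝ) :
    #(rankBelow σ p) = #(rankBelow σ' p) :=
  card_equiv (σ.trans σ'.symm) fun u => by simp [pos]

lemma pos_lt_pos_iff (σ : V ≃ Fin (Fintype.card V)) (u u' : V) :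
    pos σ u < pos σ u' ↔ σ u < σ u' := by
  simp only [pos, add_lt_add_iff_right, Nat.cast_lt, Fin.val_fin_lt]

lemma abs_ite_sub_ite_le {a b : ℝ} (hab : |a - b| ≤ 1) (P Q : Prop) [Decidable P] [Decidable Q] :
    |(if P then a else b) - (if Q then a else b)| ≤
      (if P ∧ ¬Q then 1 else 0) + (if Q ∧ ¬P then 1 else 0) := by
  split_ifs <;> simp_all [abs_sub_comm]

variable [DecidableEq V]

lemma card_rankBelow_sdiff_comm (σ σ' : V ≃ Fin (Fintype.card V)) (p : ℝ) :
    #(rankBelow σ p \ rankBelow σ' p) = #(rankBelow σ' p \ rankBelow σ p) :=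
  card_sdiff_comm (card_rankBelow_eq σ σ' p)

lemma card_rankBelow_sdiff_mul_le_kendall (π π' : V ≃ Fin (Fintype.card V)) (p : ℝ) :
    #(rankBelow π p \ rankBelow π' p) * #(rankBelow π' p \ rankBelow π p) ≤ kendall π π' := by
  rw [← card_product, kendall]
  refine card_le_card fun uv huv => ?_
  simp only [mem_product, mem_sdiff, mem_rankBelow, not_lt] at huv
  simp only [mem_filter, mem_univ, true_and, ← pos_lt_pos_iff]
  constructor <;> linarith [huv.1.1, huv.1.2, huv.2.1, huv.2.2]

lemma abs_bwt_sub_le (w : V → V → ℝ) (h01 : ∀ u v : V, 0 ≤ w u v ∧ w u v ≤ 1)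
    (π π' : V ≃ Fin (Fintype.card V)) (v : V) (p : ℝ) :
    |bwt w π v p - bwt w π' v p| ≤
      #(rankBelow π p \ rankBelow π' p) + #(rankBelow π' p \ rankBelow π p) := by
  rw [bwt, bwt, ← sum_sub_distrib]
  calc _ ≤ ∑ u ∈ univ.erase v,
          ((if u ∈ rankBelow π p \ rankBelow π' p then 1 else 0) +
            (if u ∈ rankBelow π' p \ rankBelow π p then 1 else 0) : ℝ) := by
        refine (abs_sum_le_sum_abs _ _).trans (sum_le_sum fun u _ => ?_)
        have hw : |w v u - w u v| ≤ 1 := by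
          rw [abs_sub_le_iff]
          constructor <;> linarith [h01 u v, h01 v u]
        simpa only [mem_sdiff, mem_rankBelow] using abs_ite_sub_ite_le hw _ _
    _ ≤ ∑ u, ((if u ∈ rankBelow π p \ rankBelow π' p then 1 else 0) +
            (if u ∈ rankBelow π' p \ rankBelow π p then 1 else 0) : ℝ) :=
        sum_le_sum_of_subset_of_nonneg (subset_univ _) fun _ _ _ => by positivity
    _ = _ := by
        rw [sum_add_distrib, sum_boole, sum_boole, filter_mem_eq_inter, filter_mem_eq_inter,
          univ_inter, univ_inter]

end

theorem stmt4_general {V : Type*} [Fintype V] [DecidableEq V] (w : V → V → ℝ)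
    (h01 : ∀ u v : V, 0 ≤ w u v ∧ w u v ≤ 1)
    (π π' : V ≃ Fin (Fintype.card V)) (v : V) (p : ℝ) :
    |bwt w π v p - bwt w π' v p| ≤ 2 * Real.sqrt (kendall π π') := by
  set k := #(rankBelow π p \ rankBelow π' p)
  have hk : #(rankBelow π' p \ rankBelow π p) = k := (card_rankBelow_sdiff_comm π π' p).symm
  have hk_sq : k ^ 2 ≤ kendall π π' := by
    simpa only [hk, sq] using card_rankBelow_sdiff_mul_le_kendall π π' p
  have hk_le : (k : ℝ) ≤ Real.sqrt (kendall π π') := Real.le_sqrt_of_sq_le (by exact_mod_cast hk_sq)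
  calc |bwt w π v p - bwt w π' v p| ≤ k + k := by simpa only [hk] using abs_bwt_sub_le w h01 π π' v p
    _ ≤ 2 * Real.sqrt (kendall π π') := by linarith

theorem stmt4 {V : Type*} [Fintype V] [DecidableEq V] (w : V → V → ℝ)
    (h01 : ∀ u v : V, 0 ≤ w u v ∧ w u v ≤ 1)
    (hsum : ∀ u v : V, u ≠ v → w u v + w v u = 1)
    (π π' : V ≃ Fin (Fintype.card V)) (v : V) (p : ℝ) (hp : ∀ z : ℤ, (z : ℝ) ≠ p) :
    |bwt w π v p - bwt w π' v p| ≤ 2 * Real.sqrt (kendall π π') :=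
  stmt4_general w h01 π π' v p
end

section
/- Let V be a finite set with weights w : V × V → [0,1] satisfying w(u,v)+w(v,u)=1 for distinct u,v, and let b(π,v,p) be defined as the sum over u ≠ v of w(v,u) if p > π(u) and w(u,v) if p < π(u). Then for any ranking π of V, any vertex v, and any positions j,k ∈ {1,...,|V|}: |j − k| ≤ b(π,v,j+1/2) + b(π,v,k+1/2) + 1. -/
lemma key6 {V : Type*} [Fintype V] [DecidableEq V] (w : V → V → ℝ)
    (h01 : ∀ u v : V, 0 ≤ w u v ∧ w u v ≤ 1)
    (hsum : ∀ u v : V, u ≠ v → w u v + w v u = 1)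
    (π : V ≃ Fin (Fintype.card V)) (v : V) (j k : ℕ)
    (hkn : k ≤ Fintype.card V) (hjk : j ≤ k) :
    (k : ℝ) - j ≤ bwt w π v ((j : ℝ) + 1/2) + bwt w π v ((k : ℝ) + 1/2) + 1 := by
  classical
  set T : Finset V := Finset.univ.filter (fun u : V => j ≤ (π u : ℕ) ∧ (π u : ℕ) < k) with hTdef
  have hT : T.card = k - j := by
    rw [← Nat.card_Ico j k]
    refine Finset.card_bij' (fun u _ => (π u : ℕ))
      (fun m hm => π.symm ⟨m, lt_of_lt_of_le (Finset.mem_Ico.mp hm).2 hkn⟩) ?_ ?_ ?_ ?_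
    · intro u hu
      simp only [hTdef, Finset.mem_filter] at hu
      exact Finset.mem_Ico.mpr hu.2
    · intro m hm
      simp only [hTdef, Finset.mem_filter, Equiv.apply_symm_apply]
      exact ⟨Finset.mem_univ _, (Finset.mem_Ico.mp hm).1, (Finset.mem_Ico.mp hm).2⟩
    · intro u hu
      simp
    · intro m hm
      simp
  set S := T.erase v with hSdef
  have hS : T.card - 1 ≤ S.card := Finset.pred_card_le_card_erase
  set f : V → ℝ := fun u =>
    (if pos π u < (j : ℝ) + 1/2 then w v u else w u v) +
    (if pos π u < (k : ℝ) + 1/2 then w v u else w u v) with hfdef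
  have hf0 : ∀ u : V, 0 ≤ f u := by
    intro u
    have h1 := h01 v u
    have h2 := h01 u v
    simp only [hfdef]
    split_ifs <;> linarith [h1.1, h2.1]
  have hf1 : ∀ u ∈ S, (1 : ℝ) ≤ f u := by
    intro u hu
    have huv : u ≠ v := Finset.ne_of_mem_erase hu
    have huT := Finset.mem_of_mem_erase hu
    simp only [hTdef, Finset.mem_filter] at huT
    obtain ⟨-, hj2, hk2⟩ := huT
    have hjlt : ¬ pos π u < (j : ℝ) + 1/2 := by
      simp only [pos, not_lt]
      have : (j : ℝ) ≤ (π u : ℕ) := by exact_mod_cast hj2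
      linarith
    have hklt : pos π u < (k : ℝ) + 1/2 := by
      simp only [pos]
      have : ((π u : ℕ) : ℝ) + 1 ≤ (k : ℝ) := by exact_mod_cast hk2
      linarith
    simp only [hfdef, if_neg hjlt, if_pos hklt]
    exact le_of_eq (hsum u v huv).symm
  have hsub : S ⊆ Finset.univ.erase v := by
    intro u hu
    exact Finset.mem_erase.mpr ⟨Finset.ne_of_mem_erase hu, Finset.mem_univ u⟩
  have hsum1 : (S.card : ℝ) ≤ ∑ u ∈ Finset.univ.erase v, f u := by
    calc (S.card : ℝ) = ∑ u ∈ S, (1 : ℝ) := by simp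
    _ ≤ ∑ u ∈ S, f u := Finset.sum_le_sum hf1
    _ ≤ ∑ u ∈ Finset.univ.erase v, f u :=
        Finset.sum_le_sum_of_subset_of_nonneg hsub (fun u _ _ => hf0 u)
  have hbwt : ∑ u ∈ Finset.univ.erase v, f u =
      bwt w π v ((j : ℝ) + 1/2) + bwt w π v ((k : ℝ) + 1/2) := by
    simp only [bwt, hfdef, Finset.sum_add_distrib]
  have hcard : (k : ℝ) - j ≤ (S.card : ℝ) + 1 := by
    have h1 : k - j ≤ S.card + 1 := by omega
    have h2 : ((k - j : ℕ) : ℝ) ≤ ((S.card + 1 : ℕ) : ℝ) := by exact_mod_cast h1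
    rw [Nat.cast_sub hjk] at h2
    push_cast at h2 ⊢
    linarith
  linarith [hsum1, hbwt.symm ▸ hsum1]

theorem stmt6 {V : Type*} [Fintype V] [DecidableEq V] (w : V → V → ℝ)
    (h01 : ∀ u v : V, 0 ≤ w u v ∧ w u v ≤ 1)
    (hsum : ∀ u v : V, u ≠ v → w u v + w v u = 1)
    (π : V ≃ Fin (Fintype.card V)) (v : V) (j k : ℕ)
    (hj1 : 1 ≤ j) (hjn : j ≤ Fintype.card V) (hk1 : 1 ≤ k) (hkn : k ≤ Fintype.card V) :
    |(j : ℝ) - (k : ℝ)|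
      ≤ bwt w π v ((j : ℝ) + 1/2) + bwt w π v ((k : ℝ) + 1/2) + 1 := by
  rcases le_total j k with h | h
  · have := key6 w h01 hsum π v j k hkn h
    have habs : |(j : ℝ) - (k : ℝ)| = (k : ℝ) - j := by
      rw [abs_sub_comm]
      exact abs_of_nonneg (sub_nonneg.mpr (Nat.cast_le.mpr h))
    linarith
  · have := key6 w h01 hsum π v k j hjn h
    have habs : |(j : ℝ) - (k : ℝ)| = (j : ℝ) - k :=
      abs_of_nonneg (sub_nonneg.mpr (Nat.cast_le.mpr h))
    linarith
end

section
/- Let V be a finite set of size n with weights w : V×V → [0,1], w(u,v)+w(v,u)=1 for distinct u,v, let π¹ be a ranking of V, and define r(v) = 4√(2C(π¹)) + 2b(π¹,v,π¹(v)+1/2). Then for every integer j, the number of vertices v with |π¹(v) − j| ≤ r(v) is at most 12√(2C(π¹)) + 1. -/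
noncomputable def fastCost {V : Type*} [Fintype V] (w : V → V → ℝ)
    (π : V ≃ Fin (Fintype.card V)) : ℝ :=
  ∑ uv ∈ Finset.univ.filter (fun uv : V × V => π uv.1 < π uv.2), w uv.2 uv.1

theorem stmt8 {V : Type*} [Fintype V] [DecidableEq V] (w : V → V → ℝ)
    (h01 : ∀ u v : V, 0 ≤ w u v ∧ w u v ≤ 1)
    (hsum : ∀ u v : V, u ≠ v → w u v + w v u = 1)
    (π1 : V ≃ Fin (Fintype.card V)) (j : ℤ) :
    (Set.ncard {v : V | |pos π1 v - (j : ℝ)|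
        ≤ 4 * Real.sqrt (2 * fastCost w π1) + 2 * bwt w π1 v (pos π1 v + 1/2)} : ℝ)
      ≤ 12 * Real.sqrt (2 * fastCost w π1) + 1 := by
  classical
  set C := fastCost w π1 with hC
  have hC0 : 0 ≤ C := Finset.sum_nonneg fun p _ => (h01 _ _).1
  set S := Real.sqrt (2 * C) with hS
  have hS0 : 0 ≤ S := Real.sqrt_nonneg _
  have hSS : S ^ 2 = 2 * C := Real.sq_sqrt (by linarith)
  -- rewrite bwt at the half-integer point
  have key : ∀ m k : ℕ, ((m : ℝ) < (k : ℝ) + 1/2 ↔ m ≤ k) := by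
    intro m k
    constructor
    · intro h
      by_contra hh
      push_neg at hh
      have : (k : ℝ) + 1 ≤ (m : ℝ) := by exact_mod_cast hh
      linarith
    · intro h
      have : (m : ℝ) ≤ (k : ℝ) := by exact_mod_cast h
      linarith
  have hbeq : ∀ v, bwt w π1 v (pos π1 v + 1/2)
      = (∑ u, if π1 u < π1 v then w v u else 0)
        + (∑ u, if π1 v < π1 u then w u v else 0) := by
    intro v
    rw [bwt]
    have step1 : ∀ u ∈ Finset.univ.erase v,
        (if pos π1 u < pos π1 v + 1/2 then w v u else w u v)
        = (if π1 u < π1 v then w v u else 0) + (if π1 v < π1 u then w u v else 0) := by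
      intro u hu
      have hne : u ≠ v := Finset.ne_of_mem_erase hu
      have hfne : π1 u ≠ π1 v := fun h => hne (π1.injective h)
      have hcond : pos π1 u < pos π1 v + 1/2 ↔ π1 u < π1 v := by
        unfold pos
        have h1 : ((π1 u : ℕ) : ℝ) + 1 < ((π1 v : ℕ) : ℝ) + 1 + 1/2
            ↔ ((π1 u : ℕ) : ℝ) < ((π1 v : ℕ) : ℝ) + 1/2 := by
          constructor <;> intro <;> linarith
        rw [h1, key, Fin.lt_def]
        constructor
        · intro h
          exact lt_of_le_of_ne h fun hh => hfne (Fin.val_injective hh)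
        · exact le_of_lt
      rw [if_congr hcond rfl rfl]
      rcases lt_or_gt_of_ne hfne with h | h
      · simp [h, asymm h]
      · simp [asymm h, h]
    rw [Finset.sum_congr rfl step1, Finset.sum_add_distrib]
    congr 1
    · exact Finset.sum_erase _ (by simp)
    · exact Finset.sum_erase _ (by simp)
  have hbnn : ∀ v, 0 ≤ bwt w π1 v (pos π1 v + 1/2) := by
    intro v
    rw [hbeq]
    refine add_nonneg (Finset.sum_nonneg fun u _ => ?_) (Finset.sum_nonneg fun u _ => ?_) <;>
      (split
       · exact (h01 _ _).1
       · exact le_rfl)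
  -- total mass
  have e1 : C = ∑ v, ∑ u, (if π1 v < π1 u then w u v else 0) := by
    rw [hC, fastCost, Finset.sum_filter, Fintype.sum_prod_type]
  have e2 : C = ∑ v, ∑ u, (if π1 u < π1 v then w v u else 0) := by
    rw [e1, Finset.sum_comm]
  have hsumb : ∑ v, bwt w π1 v (pos π1 v + 1/2) = 2 * C := by
    calc ∑ v, bwt w π1 v (pos π1 v + 1/2)
        = ∑ v, ((∑ u, if π1 u < π1 v then w v u else 0)
            + (∑ u, if π1 v < π1 u then w u v else 0)) :=
          Finset.sum_congr rfl fun v _ => hbeq v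
      _ = (∑ v, ∑ u, if π1 u < π1 v then w v u else 0)
            + (∑ v, ∑ u, if π1 v < π1 u then w u v else 0) := Finset.sum_add_distrib
      _ = C + C := by rw [← e1, ← e2]
      _ = 2 * C := by ring
  set Pf : Finset V := Finset.univ.filter
    (fun v => S < 2 * bwt w π1 v (pos π1 v + 1/2)) with hPf
  set Qf : Finset V := Finset.univ.filter
    (fun v => |pos π1 v - (j : ℝ)| ≤ 5 * S) with hQf
  have hP : (Pf.card : ℝ) ≤ 2 * S := by
    have hPsum : (Pf.card : ℝ) * S ≤ 2 * S ^ 2 := by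
      have h1 : ∑ v ∈ Pf, S ≤ ∑ v ∈ Pf, 2 * bwt w π1 v (pos π1 v + 1/2) :=
        Finset.sum_le_sum fun v hv => le_of_lt (Finset.mem_filter.mp hv).2
      have h2 : ∑ v ∈ Pf, 2 * bwt w π1 v (pos π1 v + 1/2)
          ≤ ∑ v, 2 * bwt w π1 v (pos π1 v + 1/2) :=
        Finset.sum_le_sum_of_subset_of_nonneg (Finset.subset_univ _)
          fun v _ _ => by linarith [hbnn v]
      have h3 : ∑ v, 2 * bwt w π1 v (pos π1 v + 1/2) = 2 * S ^ 2 := by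
        rw [← Finset.mul_sum, hsumb, hSS]
      rw [Finset.sum_const, nsmul_eq_mul] at h1
      linarith
    rcases eq_or_lt_of_le hS0 with h | h
    · have hPe : Pf = ∅ := by
        rw [Finset.eq_empty_iff_forall_notMem]
        intro v hv
        have hv' := (Finset.mem_filter.mp hv).2
        have hle : bwt w π1 v (pos π1 v + 1/2) ≤ ∑ u, bwt w π1 u (pos π1 u + 1/2) :=
          Finset.single_le_sum (fun u _ => hbnn u) (Finset.mem_univ v)
        rw [hsumb] at hle
        nlinarith [hSS]
      rw [hPe]
      simp
      linarith
    · have := mul_le_mul_of_nonneg_right hPsum (le_of_lt (inv_pos.mpr h))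
      rw [mul_assoc, mul_inv_cancel₀ (ne_of_gt h)] at this
      nlinarith
  have hQ : (Qf.card : ℝ) ≤ 10 * S + 1 := by
    set a : ℤ := ⌈(j : ℝ) - 5 * S⌉ with ha
    set bb : ℤ := ⌊(j : ℝ) + 5 * S⌋ with hbb
    have hmaps : ∀ v ∈ Qf, ((π1 v : ℕ) : ℤ) + 1 ∈ Finset.Icc a bb := by
      intro v hv
      have hv' := (Finset.mem_filter.mp hv).2
      rw [abs_le] at hv'
      rw [Finset.mem_Icc]
      constructor
      · rw [ha, Int.ceil_le]
        have := hv'.1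
        unfold pos at this
        push_cast
        linarith
      · rw [hbb, Int.le_floor]
        have := hv'.2
        unfold pos at this
        push_cast
        linarith
    have hinj : Set.InjOn (fun v => ((π1 v : ℕ) : ℤ) + 1) ↑Qf := by
      intro x _ y _ h
      simp only [add_left_inj, Int.ofNat_inj] at h
      exact π1.injective (Fin.val_injective h)
    have hcard := Finset.card_le_card_of_injOn _ hmaps hinj
    have h1 : ((bb : ℝ)) ≤ (j : ℝ) + 5 * S := Int.floor_le _
    have h2 : (j : ℝ) - 5 * S ≤ (a : ℝ) := Int.le_ceil _
    calc (Qf.card : ℝ) ≤ ((Finset.Icc a bb).card : ℝ) := by exact_mod_cast hcard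
      _ ≤ 10 * S + 1 := by
          rw [Int.card_Icc]
          rcases le_or_gt (bb + 1 - a) 0 with hle | hlt
          · rw [Int.toNat_of_nonpos hle]
            simp
            linarith
          · have : ((bb + 1 - a).toNat : ℤ) = bb + 1 - a := Int.toNat_of_nonneg (le_of_lt hlt)
            have : ((bb + 1 - a).toNat : ℝ) = (bb : ℝ) + 1 - a := by exact_mod_cast this
            rw [this]
            linarith
  have hsub : {v : V | |pos π1 v - (j : ℝ)|
      ≤ 4 * S + 2 * bwt w π1 v (pos π1 v + 1/2)} ⊆ ↑(Pf ∪ Qf) := by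
    intro v hv
    simp only [Set.mem_setOf_eq] at hv
    simp only [Finset.coe_union, Set.mem_union, Finset.mem_coe, hPf, hQf,
      Finset.mem_filter, Finset.mem_univ, true_and]
    by_cases h : S < 2 * bwt w π1 v (pos π1 v + 1/2)
    · exact Or.inl h
    · push_neg at h
      exact Or.inr (by linarith)
  have hncard : (Set.ncard {v : V | |pos π1 v - (j : ℝ)|
      ≤ 4 * S + 2 * bwt w π1 v (pos π1 v + 1/2)}) ≤ (Pf ∪ Qf).card := by
    have := Set.ncard_le_ncard hsub (Finset.finite_toSet _)
    rwa [Set.ncard_coe_finset] at this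
  have hcu : ((Pf ∪ Qf).card : ℝ) ≤ (Pf.card : ℝ) + (Qf.card : ℝ) := by
    exact_mod_cast Finset.card_union_le Pf Qf
  have hfin : (Set.ncard {v : V | |pos π1 v - (j : ℝ)|
      ≤ 4 * S + 2 * bwt w π1 v (pos π1 v + 1/2)} : ℝ) ≤ ((Pf ∪ Qf).card : ℝ) := by
    exact_mod_cast hncard
  linarith
end

section
/- Let c be a nonnegative real-valued constraint system on 3-element rankings over a finite set V of size n, such that c takes values in [0,1]. Define b(σ,v,p) = Σ over 2-element subsets Q ⊆ Domain(σ)\{v} of c(Q ↦ σ ⊕ v ↦ p). Suppose c has the betweenness property: for every 2-subset Q and every vertex v and positions p ≠ p' such that some element of Q lies strictly between p and p' in σ, we have c(Q ↦ σ ⊕ v ↦ p) + c(Q ↦ σ ⊕ v ↦ p') ≥ 1. Then for any ranking π of V, vertex v, and positions p, p', if B is the set of vertices (other than v) strictly between p and p' in π, then b(π,v,p) + b(π,v,p') ≥ (n−2)·|B| / 2. -/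
/-- `b(f, v, p)`: total cost of the arity-3 constraints containing `v`, when `v`
is placed at position `p` and all other vertices are at their positions under `f`. -/
noncomputable def b3 {V : Type*} [Fintype V] [DecidableEq V]
    (c : Finset V → (V → ℝ) → ℝ) (f : V → ℝ) (v : V) (p : ℝ) : ℝ :=
  ∑ Q ∈ (Finset.univ.erase v).powersetCard 2, c (insert v Q) (Function.update f v p)

theorem stmt10 {V : Type*} [Fintype V] [DecidableEq V]
    (c : Finset V → (V → ℝ) → ℝ)
    (h01 : ∀ (S : Finset V) (f : V → ℝ), 0 ≤ c S f ∧ c S f ≤ 1)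
    (hbet : ∀ (Q : Finset V) (v : V), Q.card = 2 → v ∉ Q →
      ∀ (f : V → ℝ) (p p' : ℝ), p ≠ p' →
        (∃ u ∈ Q, min p p' < f u ∧ f u < max p p') →
        1 ≤ c (insert v Q) (Function.update f v p) + c (insert v Q) (Function.update f v p'))
    (π : V ≃ Fin (Fintype.card V)) (v : V) (p p' : ℝ) :
    ((Fintype.card V : ℝ) - 2)
        * (Set.ncard {u : V | u ≠ v ∧ min p p' < pos π u ∧ pos π u < max p p'}) / 2
      ≤ b3 c (pos π) v p + b3 c (pos π) v p' := by
  classical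
  set f := pos π with hf
  -- RHS is always nonnegative
  have hRHS : 0 ≤ b3 c f v p + b3 c f v p' := by
    have h1 : 0 ≤ b3 c f v p := Finset.sum_nonneg fun Q _ => (h01 _ _).1
    have h2 : 0 ≤ b3 c f v p' := Finset.sum_nonneg fun Q _ => (h01 _ _).1
    linarith
  rcases le_or_gt ((Fintype.card V : ℝ) - 2) 0 with hn2 | hn2
  · have hnc : (0 : ℝ) ≤ (Set.ncard {u : V | u ≠ v ∧ min p p' < f u ∧ f u < max p p'}) :=
      Nat.cast_nonneg _
    have := mul_nonpos_of_nonpos_of_nonneg hn2 hnc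
    linarith
  by_cases hpp : p = p'
  · have hB : {u : V | u ≠ v ∧ min p p' < f u ∧ f u < max p p'} = ∅ := by
      ext u
      simp only [Set.mem_setOf_eq, hpp, min_self, max_self, Set.mem_empty_iff_false, iff_false]
      rintro ⟨-, h1, h2⟩
      linarith
    rw [hB]
    simpa using hRHS
  -- main case
  set B : Finset V := Finset.univ.filter
      (fun u => u ≠ v ∧ min p p' < f u ∧ f u < max p p') with hBdef
  have hncard : Set.ncard {u : V | u ≠ v ∧ min p p' < f u ∧ f u < max p p'} = B.card := by
    rw [← Set.ncard_coe_finset]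
    congr 1
    ext u
    simp [hBdef]
  set S : Finset (Finset V) := (Finset.univ.erase v).powersetCard 2 with hSdef
  set S₁ : Finset (Finset V) := S.filter (fun Q => ∃ u ∈ B, u ∈ Q) with hS1def
  -- Key 1: S₁.card ≤ RHS
  have key1 : (S₁.card : ℝ) ≤ b3 c f v p + b3 c f v p' := by
    have hsum : b3 c f v p + b3 c f v p'
        = ∑ Q ∈ S, (c (insert v Q) (Function.update f v p)
            + c (insert v Q) (Function.update f v p')) := by
      rw [b3, b3, ← Finset.sum_add_distrib]
    rw [hsum]
    have h1 : (S₁.card : ℝ) = ∑ Q ∈ S₁, (1 : ℝ) := by simp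
    rw [h1]
    have hsub : S₁ ⊆ S := Finset.filter_subset _ _
    calc ∑ Q ∈ S₁, (1 : ℝ)
        ≤ ∑ Q ∈ S₁, (c (insert v Q) (Function.update f v p)
            + c (insert v Q) (Function.update f v p')) := by
          apply Finset.sum_le_sum
          intro Q hQ
          rw [hS1def, Finset.mem_filter] at hQ
          obtain ⟨hQS, u, huB, huQ⟩ := hQ
          rw [hSdef, Finset.mem_powersetCard] at hQS
          obtain ⟨hQsub, hQcard⟩ := hQS
          have hvQ : v ∉ Q := fun h => (Finset.mem_erase.mp (hQsub h)).1 rfl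
          rw [hBdef, Finset.mem_filter] at huB
          exact hbet Q v hQcard hvQ f p p' hpp ⟨u, huQ, huB.2.2⟩
      _ ≤ ∑ Q ∈ S, (c (insert v Q) (Function.update f v p)
            + c (insert v Q) (Function.update f v p')) := by
          apply Finset.sum_le_sum_of_subset_of_nonneg hsub
          intro Q _ _
          have := (h01 (insert v Q) (Function.update f v p)).1
          have := (h01 (insert v Q) (Function.update f v p')).1
          linarith
  -- Key 2: (n-2) * B.card ≤ 2 * S₁.card  (ℕ)
  have hn3 : 2 < Fintype.card V := by
    by_contra h
    push_neg at h
    have : (Fintype.card V : ℝ) ≤ 2 := by exact_mod_cast h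
    linarith
  have hcount : ∀ u ∈ B, Fintype.card V - 2 ≤ (S₁.filter (fun Q => u ∈ Q)).card := by
    intro u huB
    have huv : u ≠ v := ((Finset.mem_filter.mp huB).2).1
    have huE : u ∈ Finset.univ.erase v := Finset.mem_erase.mpr ⟨huv, Finset.mem_univ u⟩
    set E : Finset V := (Finset.univ.erase v).erase u with hEdef
    have hEcard : E.card = Fintype.card V - 2 := by
      rw [hEdef, Finset.card_erase_of_mem huE, Finset.card_erase_of_mem (Finset.mem_univ v),
        Finset.card_univ]
      omega
    have himg : E.image (fun w => insert u {w}) ⊆ S₁.filter (fun Q => u ∈ Q) := by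
      intro Q hQ
      rw [Finset.mem_image] at hQ
      obtain ⟨w, hwE, rfl⟩ := hQ
      have hwu : w ≠ u := (Finset.mem_erase.mp hwE).1
      have hwE' : w ∈ Finset.univ.erase v := (Finset.mem_erase.mp hwE).2
      have hcard2 : (insert u ({w} : Finset V)).card = 2 := by
        rw [Finset.card_insert_of_notMem (by simp [Ne.symm hwu])]
        simp
      refine Finset.mem_filter.mpr ⟨Finset.mem_filter.mpr ⟨?_, ⟨u, huB, by simp⟩⟩, by simp⟩
      rw [hSdef, Finset.mem_powersetCard]
      refine ⟨?_, hcard2⟩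
      intro x hx
      simp only [Finset.mem_insert, Finset.mem_singleton] at hx
      rcases hx with rfl | rfl
      · exact huE
      · exact hwE'
    have hinj : Set.InjOn (fun w => insert u ({w} : Finset V)) E := by
      intro w hwE w' hw'E h
      have hwu : w ≠ u := (Finset.mem_erase.mp hwE).1
      have h' : insert u ({w} : Finset V) = insert u ({w'} : Finset V) := h
      have : w ∈ insert u ({w'} : Finset V) := by
        rw [← h']; simp
      simp only [Finset.mem_insert, Finset.mem_singleton] at this
      tauto
    calc Fintype.card V - 2 = E.card := hEcard.symm
      _ = (E.image (fun w => insert u {w})).card := (Finset.card_image_of_injOn hinj).symm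
      _ ≤ (S₁.filter (fun Q => u ∈ Q)).card := Finset.card_le_card himg
  have key2 : (Fintype.card V - 2) * B.card ≤ 2 * S₁.card := by
    have hdc : ∑ u ∈ B, (S₁.filter (fun Q => u ∈ Q)).card
        = ∑ Q ∈ S₁, (B.filter (fun u => u ∈ Q)).card := by
      simp only [Finset.card_filter]
      exact Finset.sum_comm
    have hstep1 : (Fintype.card V - 2) * B.card ≤ ∑ u ∈ B, (S₁.filter (fun Q => u ∈ Q)).card := by
      calc (Fintype.card V - 2) * B.card = ∑ _u ∈ B, (Fintype.card V - 2) := by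
            rw [Finset.sum_const, smul_eq_mul, mul_comm]
        _ ≤ ∑ u ∈ B, (S₁.filter (fun Q => u ∈ Q)).card := Finset.sum_le_sum hcount
    have hstep2 : ∑ Q ∈ S₁, (B.filter (fun u => u ∈ Q)).card ≤ 2 * S₁.card := by
      calc ∑ Q ∈ S₁, (B.filter (fun u => u ∈ Q)).card ≤ ∑ Q ∈ S₁, 2 := by
            apply Finset.sum_le_sum
            intro Q hQ
            have hQS : Q ∈ S := Finset.mem_of_mem_filter _ hQ
            have hQcard : Q.card = 2 := (Finset.mem_powersetCard.mp hQS).2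
            calc (B.filter (fun u => u ∈ Q)).card ≤ Q.card :=
                  Finset.card_le_card (fun x hx => (Finset.mem_filter.mp hx).2)
              _ = 2 := hQcard
        _ = 2 * S₁.card := by rw [Finset.sum_const, smul_eq_mul, mul_comm]
    omega
  -- conclude
  rw [hncard]
  have hcast : ((Fintype.card V : ℝ) - 2) * B.card ≤ 2 * S₁.card := by
    have h2n : 2 ≤ Fintype.card V := le_of_lt hn3
    have := key2
    have : ((Fintype.card V - 2 : ℕ) : ℝ) * (B.card : ℝ) ≤ 2 * (S₁.card : ℝ) := by exact_mod_cast this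
    rwa [Nat.cast_sub h2n] at this
    
  linarith
end

section
/- Let T be a tournament whose minimum feedback arc set has size k, and let (u,v) be an arc of T contained in more than 2k directed triangles. Then every minimum feedback arc set of T contains the arc (u,v). -/
/-!
A feedback arc set is encoded by a ranking `π` of the vertices: its arcs are the back arcs of `π`.
If a ranking `π` puts `u` before `v` while `(u,v)` is an arc, then every directed triangle
`u → v → w → u` has a back arc other than `(u,v)`: `(v,w)` if `w` comes before `v`, and `(w,u)`
otherwise. Distinct triangles give distinct back arcs, as `(v,u)` is not an arc, so `π` has at
least as many back arcs as there are such triangles. An optimal ranking has at most `k` back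
arcs, fewer than the number of triangles, so it must place `v` before `u`.
-/

def backCost {V : Type*} [Fintype V] (r : V → V → Prop) [DecidableRel r]
    (π : V ≃ Fin (Fintype.card V)) : ℕ :=
  (Finset.univ.filter (fun uv : V × V => r uv.1 uv.2 ∧ π uv.2 < π uv.1)).card

theorem card_triangles_le_backCost {V : Type*} [Fintype V] (r : V → V → Prop)
    [DecidableRel r] {u v : V} (hvu : ¬ r v u) (π : V ≃ Fin (Fintype.card V))
    (hlt : π u < π v) :
    (Finset.univ.filter (fun w : V => r v w ∧ r w u)).card ≤ backCost r π := by
  let backArc : V → V × V := fun w => if π w < π v then (v, w) else (w, u)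
  refine Finset.card_le_card_of_injOn backArc ?mapsTo ?injOn
  case mapsTo =>
    intro w hw
    simp only [Finset.coe_filter, Finset.mem_univ, true_and, Set.mem_ofPred_eq] at hw ⊢
    by_cases hwv : π w < π v
    · simpa [backArc, hwv] using hw.1
    · simpa [backArc, hwv] using ⟨hw.2, hlt.trans_le (not_lt.mp hwv)⟩
  case injOn =>
    intro w₁ hw₁ w₂ hw₂ h
    simp only [Finset.coe_filter, Finset.mem_univ, true_and, Set.mem_ofPred_eq] at hw₁ hw₂
    by_cases h₁ : π w₁ < π v <;> by_cases h₂ : π w₂ < π v <;>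
      simp only [backArc, h₁, h₂, if_true, if_false, Prod.mk.injEq] at h
    · exact h.2
    · exact absurd (h.2 ▸ hw₁.1) hvu
    · exact absurd (h.2 ▸ hw₂.1) hvu
    · exact h.1

theorem stmt18_general {V : Type*} [Fintype V] (r : V → V → Prop) [DecidableRel r]
    (hirr : ∀ u : V, ¬ r u u)
    (htot : ∀ u w : V, u ≠ w → (r u w ↔ ¬ r w u))
    (u v : V) (huv : r u v)
    (π : V ≃ Fin (Fintype.card V))
    (htri : 2 * backCost r π
      < (Finset.univ.filter (fun w : V => r v w ∧ r w u)).card) :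
    ∀ π' : V ≃ Fin (Fintype.card V),
      (∀ π'' : V ≃ Fin (Fintype.card V), backCost r π' ≤ backCost r π'') →
      π' v < π' u := by
  intro π' hopt
  by_contra hvu
  have hne : u ≠ v := fun h => hirr u (h ▸ huv)
  have hlt : π' u < π' v :=
    lt_of_le_of_ne (not_lt.mp hvu) (π'.injective.ne hne)
  have hbound := card_triangles_le_backCost r ((htot u v hne).mp huv) π' hlt
  have := hopt π
  omega

/-- If the arc `(u,v)` lies in more than `2k` directed triangles, where `k` is the
minimum feedback arc set size, then every optimal ranking pays for `(u,v)`,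
i.e. places `v` before `u`. -/
theorem stmt18 {V : Type*} [Fintype V] (r : V → V → Prop) [DecidableRel r]
    (hirr : ∀ u : V, ¬ r u u)
    (htot : ∀ u w : V, u ≠ w → (r u w ↔ ¬ r w u))
    (u v : V) (huv : r u v)
    (π : V ≃ Fin (Fintype.card V))
    (hmin : ∀ π' : V ≃ Fin (Fintype.card V), backCost r π ≤ backCost r π')
    (htri : 2 * backCost r π
      < (Finset.univ.filter (fun w : V => r v w ∧ r w u)).card) :
    ∀ π' : V ≃ Fin (Fintype.card V),
      (∀ π'' : V ≃ Fin (Fintype.card V), backCost r π' ≤ backCost r π'') →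
      π' v < π' u :=
  stmt18_general r hirr htot u v huv π htri
end
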